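/- In the network model, for every scheduling variable U with U k f ∈ {0,1}, every beamformer collection V, every Γ : 𝓚 → 𝓕 → ℝ with Γ k f > −1 for all k, f, and every Y : 𝓚 → 𝓕 → ℂ, one has f_q(U, V, Γ, Y) ≤ f_r(U, V, Γ), with equality if and only if Y k f = √((w k)·(1 + Γ k f))·(U k f)·⟪V k f, h k (β k) f⟫ / (S_{k,f}(U,V) + I_{k,f}(U,V)) for every k and f. -/

import Mathlib

open scoped BigOperators

variable {𝓑 𝓕 𝓚 : Type*}

/-- Signal power `S_{k,f}(U,V) = U k f · |⟪h k (β k) f, V k f⟫|²`. -/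
noncomputable def sigPow {M : ℕ} (β : 𝓚 → 𝓑)
    (h : 𝓚 → 𝓑 → 𝓕 → EuclideanSpace ℂ (Fin M))
    (U : 𝓚 → 𝓕 → ℝ) (V : 𝓚 → 𝓕 → EuclideanSpace ℂ (Fin M)) (k : 𝓚) (f : 𝓕) : ℝ :=
  U k f * ‖(inner ℂ (h k (β k) f) (V k f) : ℂ)‖ ^ 2

/-- Interference-plus-noise power
`I_{k,f}(U,V) = ∑_{k' ≠ k} U k' f · |⟪h k (β k') f, V k' f⟫|² + (σ k f)²`. -/
noncomputable def intPow {M : ℕ} [Fintype 𝓚] [DecidableEq 𝓚] (β : 𝓚 → 𝓑)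
    (h : 𝓚 → 𝓑 → 𝓕 → EuclideanSpace ℂ (Fin M)) (σ : 𝓚 → 𝓕 → ℝ)
    (U : 𝓚 → 𝓕 → ℝ) (V : 𝓚 → 𝓕 → EuclideanSpace ℂ (Fin M)) (k : 𝓚) (f : 𝓕) : ℝ :=
  (∑ k' ∈ Finset.univ.erase k,
      U k' f * ‖(inner ℂ (h k (β k') f) (V k' f) : ℂ)‖ ^ 2) + (σ k f) ^ 2

/-- SINR `γ_{k,f}(U,V) = S_{k,f}(U,V) / I_{k,f}(U,V)`. -/
noncomputable def sinr {M : ℕ} [Fintype 𝓚] [DecidableEq 𝓚] (β : 𝓚 → 𝓑)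
    (h : 𝓚 → 𝓑 → 𝓕 → EuclideanSpace ℂ (Fin M)) (σ : 𝓚 → 𝓕 → ℝ)
    (U : 𝓚 → 𝓕 → ℝ) (V : 𝓚 → 𝓕 → EuclideanSpace ℂ (Fin M)) (k : 𝓚) (f : 𝓕) : ℝ :=
  sigPow β h U V k f / intPow β h σ U V k f

/-- Weighted sum rate `f₀(U,V) = ∑_{k,f} w k · log(1 + γ_{k,f}(U,V))`. -/
noncomputable def f0 {M : ℕ} [Fintype 𝓚] [DecidableEq 𝓚] [Fintype 𝓕] (β : 𝓚 → 𝓑)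
    (h : 𝓚 → 𝓑 → 𝓕 → EuclideanSpace ℂ (Fin M)) (w : 𝓚 → ℝ) (σ : 𝓚 → 𝓕 → ℝ)
    (U : 𝓚 → 𝓕 → ℝ) (V : 𝓚 → 𝓕 → EuclideanSpace ℂ (Fin M)) : ℝ :=
  ∑ k, ∑ f, w k * Real.log (1 + sinr β h σ U V k f)

/-- Lagrangian-dual-transform objective `f_r(U,V,Γ)`. -/
noncomputable def fr {M : ℕ} [Fintype 𝓚] [DecidableEq 𝓚] [Fintype 𝓕] (β : 𝓚 → 𝓑)
    (h : 𝓚 → 𝓑 → 𝓕 → EuclideanSpace ℂ (Fin M)) (w : 𝓚 → ℝ) (σ : 𝓚 → 𝓕 → ℝ)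
    (U : 𝓚 → 𝓕 → ℝ) (V : 𝓚 → 𝓕 → EuclideanSpace ℂ (Fin M)) (Γ : 𝓚 → 𝓕 → ℝ) : ℝ :=
  ∑ k, ∑ f,
    (w k * Real.log (1 + Γ k f) - w k * Γ k f +
      w k * (1 + Γ k f) * sigPow β h U V k f /
        (sigPow β h U V k f + intPow β h σ U V k f))

/-- Quadratic-transform objective `f_q(U,V,Γ,Y)`. -/
noncomputable def fq {M : ℕ} [Fintype 𝓚] [DecidableEq 𝓚] [Fintype 𝓕] (β : 𝓚 → 𝓑)
    (h : 𝓚 → 𝓑 → 𝓕 → EuclideanSpace ℂ (Fin M)) (w : 𝓚 → ℝ) (σ : 𝓚 → 𝓕 → ℝ)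
    (U : 𝓚 → 𝓕 → ℝ) (V : 𝓚 → 𝓕 → EuclideanSpace ℂ (Fin M)) (Γ : 𝓚 → 𝓕 → ℝ)
    (Y : 𝓚 → 𝓕 → ℂ) : ℝ :=
  ∑ k, ∑ f,
    (w k * (Real.log (1 + Γ k f) - Γ k f) +
      2 * ((starRingEnd ℂ) (Y k f) *
        (((Real.sqrt (w k * (1 + Γ k f)) * U k f : ℝ) : ℂ) *
          (inner ℂ (V k f) (h k (β k) f) : ℂ))).re -
      ‖Y k f‖ ^ 2 * (sigPow β h U V k f + intPow β h σ U V k f))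

/-! Completing the square: for `D > 0` one has
`2 Re(conj y * a) - ‖y‖² D = ‖a‖² / D - ‖a - D y‖² / D`.
Take `a = √(w(1+Γ)) U ⟪V, h⟫` and `D = S + I > 0` in each summand; since `U² = U`,
`‖a‖² = w(1+Γ) S`, so each summand of `f_q` is that of `f_r` minus `‖a - D y‖² / D`. -/

open ComplexConjugate

theorem Fintype.sum_sum_eq_sum_sum_iff_of_le {ι κ M : Type*} [Fintype ι] [Fintype κ]
    [AddCommMonoid M] [PartialOrder M] [IsOrderedCancelAddMonoid M] {F G : ι → κ → M}
    (h : ∀ i j, F i j ≤ G i j) :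
    ∑ i, ∑ j, F i j = ∑ i, ∑ j, G i j ↔ ∀ i j, F i j = G i j := by
  rw [Finset.sum_eq_sum_iff_of_le fun i _ => Finset.sum_le_sum fun j _ => h i j]
  simp only [Finset.mem_univ, true_implies,
    Finset.sum_eq_sum_iff_of_le fun i _ => h _ i]

namespace Complex

theorem two_re_conj_mul_sub_sq_norm_mul_eq {D : ℝ} (hD : D ≠ 0) (a y : ℂ) :
    2 * (conj y * a).re - ‖y‖ ^ 2 * D = ‖a‖ ^ 2 / D - ‖a - D * y‖ ^ 2 / D := by
  simp only [Complex.sq_norm, normSq_sub, normSq_ofReal, map_mul, conj_ofReal, mul_re, mul_im,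
    ofReal_re, ofReal_im, conj_re, conj_im]
  field_simp
  ring

theorem two_re_conj_mul_sub_sq_norm_mul_le {D : ℝ} (hD : 0 < D) (a y : ℂ) :
    2 * (conj y * a).re - ‖y‖ ^ 2 * D ≤ ‖a‖ ^ 2 / D := by
  rw [two_re_conj_mul_sub_sq_norm_mul_eq hD.ne']
  exact sub_le_self _ (by positivity)

theorem two_re_conj_mul_sub_sq_norm_mul_eq_iff {D : ℝ} (hD : 0 < D) (a y : ℂ) :
    2 * (conj y * a).re - ‖y‖ ^ 2 * D = ‖a‖ ^ 2 / D ↔ y = a / D := by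
  have hD' : (D : ℂ) ≠ 0 := ofReal_ne_zero.mpr hD.ne'
  rw [two_re_conj_mul_sub_sq_norm_mul_eq hD.ne', sub_eq_self, div_eq_zero_iff, or_iff_left hD.ne',
    sq_eq_zero_iff, norm_eq_zero, sub_eq_zero, eq_div_iff hD', mul_comm, eq_comm]

end Complex

theorem sigPow_nonneg {M : ℕ} (β : 𝓚 → 𝓑) (h : 𝓚 → 𝓑 → 𝓕 → EuclideanSpace ℂ (Fin M))
    {U : 𝓚 → 𝓕 → ℝ} (V : 𝓚 → 𝓕 → EuclideanSpace ℂ (Fin M)) {k : 𝓚} {f : 𝓕}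
    (hU : 0 ≤ U k f) : 0 ≤ sigPow β h U V k f := by
  unfold sigPow
  positivity

theorem intPow_pos {M : ℕ} [Fintype 𝓚] [DecidableEq 𝓚] (β : 𝓚 → 𝓑)
    (h : 𝓚 → 𝓑 → 𝓕 → EuclideanSpace ℂ (Fin M)) {σ : 𝓚 → 𝓕 → ℝ} {U : 𝓚 → 𝓕 → ℝ}
    (V : 𝓚 → 𝓕 → EuclideanSpace ℂ (Fin M)) {k : 𝓚} {f : 𝓕} (hU : ∀ k', 0 ≤ U k' f)
    (hσ : σ k f ≠ 0) : 0 < intPow β h σ U V k f := by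
  unfold intPow
  exact add_pos_of_nonneg_of_pos (Finset.sum_nonneg fun k' _ => by have := hU k'; positivity)
    (sq_pos_of_ne_zero hσ)

theorem sq_norm_ofReal_sqrt_mul_inner {M : ℕ} (β : 𝓚 → 𝓑)
    (h : 𝓚 → 𝓑 → 𝓕 → EuclideanSpace ℂ (Fin M)) {U : 𝓚 → 𝓕 → ℝ}
    (V : 𝓚 → 𝓕 → EuclideanSpace ℂ (Fin M)) {k : 𝓚} {f : 𝓕} (hU : U k f = 0 ∨ U k f = 1)
    {c : ℝ} (hc : 0 ≤ c) :
    ‖((√c * U k f : ℝ) : ℂ) * inner ℂ (V k f) (h k (β k) f)‖ ^ 2 = c * sigPow β h U V k f := by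
  rw [norm_mul, mul_pow, Complex.norm_real, Real.norm_eq_abs, sq_abs, mul_pow, Real.sq_sqrt hc,
    norm_inner_symm, sigPow]
  rcases hU with hU | hU <;> simp [hU]

/-- Quadratic transform bound in the network model: for binary scheduling `U`, any
beamformers `V`, any `Γ` with `Γ k f > −1`, and any auxiliary `Y`, one has
`f_q(U,V,Γ,Y) ≤ f_r(U,V,Γ)`, with equality iff
`Y k f = √(w k·(1+Γ k f))·(U k f)·⟪V k f, h k (β k) f⟫ / (S_{k,f} + I_{k,f})`. -/
theorem fq_le_fr {M : ℕ} [Fintype 𝓚] [DecidableEq 𝓚] [Fintype 𝓕]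
    (β : 𝓚 → 𝓑) (h : 𝓚 → 𝓑 → 𝓕 → EuclideanSpace ℂ (Fin M))
    (w : 𝓚 → ℝ) (σ : 𝓚 → 𝓕 → ℝ) (hw : ∀ k, 0 < w k) (hσ : ∀ k f, 0 < σ k f)
    (U : 𝓚 → 𝓕 → ℝ) (hU : ∀ k f, U k f = 0 ∨ U k f = 1)
    (V : 𝓚 → 𝓕 → EuclideanSpace ℂ (Fin M))
    (Γ : 𝓚 → 𝓕 → ℝ) (hΓ : ∀ k f, -1 < Γ k f) (Y : 𝓚 → 𝓕 → ℂ) :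
    fq β h w σ U V Γ Y ≤ fr β h w σ U V Γ ∧
      (fq β h w σ U V Γ Y = fr β h w σ U V Γ ↔
        ∀ k f, Y k f =
          ((Real.sqrt (w k * (1 + Γ k f)) * U k f : ℝ) : ℂ) *
            (inner ℂ (V k f) (h k (β k) f) : ℂ) /
            ((sigPow β h U V k f + intPow β h σ U V k f : ℝ) : ℂ)) := by
  have hU₀ : ∀ k f, 0 ≤ U k f := fun k f => by rcases hU k f with hU | hU <;> simp [hU]
  have hD : ∀ k f, 0 < sigPow β h U V k f + intPow β h σ U V k f := fun k f =>
    add_pos_of_nonneg_of_pos (sigPow_nonneg β h V (hU₀ k f))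
      (intPow_pos β h V (fun k' => hU₀ k' f) (hσ k f).ne')
  have ha : ∀ k f, w k * (1 + Γ k f) * sigPow β h U V k f =
      ‖((√(w k * (1 + Γ k f)) * U k f : ℝ) : ℂ) * inner ℂ (V k f) (h k (β k) f)‖ ^ 2 :=
    fun k f => (sq_norm_ofReal_sqrt_mul_inner β h V (hU k f)
      (mul_nonneg (hw k).le (by linarith [hΓ k f]))).symm
  simp only [fq, fr, ← mul_sub, ha, add_sub_assoc]
  refine ⟨Finset.sum_le_sum fun k _ => Finset.sum_le_sum fun f _ =>
      add_le_add_right (Complex.two_re_conj_mul_sub_sq_norm_mul_le (hD k f) _ _) _,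
    (Fintype.sum_sum_eq_sum_sum_iff_of_le fun k f =>
      add_le_add_right (Complex.two_re_conj_mul_sub_sq_norm_mul_le (hD k f) _ _) _).trans
      (forall₂_congr fun k f => ?_)⟩
  rw [add_right_inj]
  exact Complex.two_re_conj_mul_sub_sq_norm_mul_eq_iff (hD k f) _ _
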